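/- In sl(3,ℂ) with the Gell-Mann basis λ₁,…,λ₈ (realized as the standard traceless 3×3 Hermitian Gell-Mann matrices, with Lie bracket the matrix commutator), the sets s₊ := span_ℂ{λ₃ + i λ₈, λ₁ + i λ₂, λ₄ + i λ₅, λ₆ + i λ₇} and s₋ := span_ℂ{λ₃ − i λ₈, λ₁ − i λ₂, λ₄ − i λ₅, λ₆ − i λ₇} are Lie subalgebras of sl(3,ℂ) satisfying s₊ ⊕ s₋ = sl(3,ℂ) as vector spaces, and both are solvable. -/

import Mathlib

open Matrix

attribute [local instance] LieRing.ofAssociativeRing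

/-- The standard Gell-Mann matrices `λ₁,…,λ₈` (indexed by `Fin 8`, so `gellMann k = λ_{k+1}`). -/
noncomputable def gellMann : Fin 8 → Matrix (Fin 3) (Fin 3) ℂ
  | 0 => !![0, 1, 0; 1, 0, 0; 0, 0, 0]
  | 1 => !![0, -Complex.I, 0; Complex.I, 0, 0; 0, 0, 0]
  | 2 => !![1, 0, 0; 0, -1, 0; 0, 0, 0]
  | 3 => !![0, 0, 1; 0, 0, 0; 1, 0, 0]
  | 4 => !![0, 0, -Complex.I; 0, 0, 0; Complex.I, 0, 0]
  | 5 => !![0, 0, 0; 0, 0, 1; 0, 1, 0]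
  | 6 => !![0, 0, 0; 0, 0, -Complex.I; 0, Complex.I, 0]
  | 7 => ((Real.sqrt 3 : ℂ))⁻¹ • !![1, 0, 0; 0, 1, 0; 0, 0, -2]

/-! `s₊` consists of the traceless upper triangular matrices whose diagonal lies on the line
through `λ₃ + iλ₈` (the matrices `λ₁ + iλ₂`, `λ₄ + iλ₅`, `λ₆ + iλ₇` are twice the elementary
matrices `E₁₂`, `E₁₃`, `E₂₃`), and `s₋` is its lower triangular analogue. A commutator of two
triangular matrices is strictly triangular, which gives both closure under the bracket and
solvability. Since `λₐ = ((λₐ + iλ_b) + (λₐ - iλ_b)) / 2` and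
`λ_b = ((λₐ + iλ_b) - (λₐ - iλ_b)) / 2i`, `s₊ + s₋` contains every Gell-Mann matrix, hence all
of `sl(3, ℂ)`; as `dim s₊ + dim s₋ ≤ 8 = dim sl(3, ℂ)`, the sum is direct. -/

open Module

theorem LieSubalgebra.isSolvable_of_lie_mem_succ {R L : Type*} [CommRing R] [LieRing L]
    [LieAlgebra R L] (V : ℕ → Submodule R L)
    (hV : ∀ k, ∀ x ∈ V k, ∀ y ∈ V k, ⁅x, y⁆ ∈ V (k + 1))
    (S : LieSubalgebra R L) (hS : S.toSubmodule ≤ V 0) {n : ℕ} (hn : V n = ⊥) :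
    LieAlgebra.IsSolvable S := by
  have hmem : ∀ k, ∀ x ∈ LieAlgebra.derivedSeries R S k, (x : L) ∈ V k := by
    intro k
    induction k with
    | zero => exact fun x _ => hS x.2
    | succ k ih =>
      intro x hx
      rw [LieAlgebra.derivedSeries_def, LieAlgebra.derivedSeriesOfIdeal_succ,
        ← LieSubmodule.mem_toSubmodule, LieSubmodule.lieIdeal_oper_eq_linear_span'] at hx
      refine Submodule.span_le (p := (V (k + 1)).comap S.toSubmodule.subtype).2 ?_ hx
      rintro _ ⟨a, ha, b, hb, rfl⟩
      exact hV k _ (ih a ha) _ (ih b hb)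
  refine LieAlgebra.IsSolvable.mk (R := R) (k := n) ((LieSubmodule.eq_bot_iff _).2 fun x hx => ?_)
  simpa [hn] using hmem n x hx

namespace Matrix

variable (R : Type*) {n : Type*} [CommRing R]

/-- For `h = Fin.val`, `upperBand R h 0` and `upperBand R h 1` are the upper triangular and the
strictly upper triangular matrices; for `h = Fin.val ∘ Fin.rev` they are the lower triangular
ones. -/
def upperBand (h : n → ℕ) (k : ℕ) : Submodule R (Matrix n n R) where
  carrier := {A | ∀ i j, h j < h i + k → A i j = 0}
  add_mem' hA hB i j hij := by simp [hA i j hij, hB i j hij]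
  zero_mem' _ _ _ := rfl
  smul_mem' c A hA i j hij := by simp [hA i j hij]

variable {R} {h : n → ℕ}

theorem upperBand_anti {k l : ℕ} (hkl : k ≤ l) : upperBand R h l ≤ upperBand R h k :=
  fun _ hA i j hij => hA i j (by omega)

variable [Fintype n]

theorem mul_mem_upperBand {k l : ℕ} {A B : Matrix n n R} (hA : A ∈ upperBand R h k)
    (hB : B ∈ upperBand R h l) : A * B ∈ upperBand R h (k + l) := by
  intro i j hij
  rw [mul_apply]
  refine Finset.sum_eq_zero fun m _ => ?_
  by_cases him : h m < h i + k
  · rw [hA i m him, zero_mul]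
  · rw [hB m j (by omega), mul_zero]

theorem mul_apply_self_of_mem_upperBand_zero (hh : Function.Injective h) {A B : Matrix n n R}
    (hA : A ∈ upperBand R h 0) (hB : B ∈ upperBand R h 0) (i : n) :
    (A * B) i i = A i i * B i i := by
  rw [mul_apply]
  refine Finset.sum_eq_single i (fun m _ hmi => ?_) (by simp)
  rcases lt_or_gt_of_ne (hh.ne hmi) with hlt | hlt
  · rw [hA i m (by omega), zero_mul]
  · rw [hB m i (by omega), mul_zero]

theorem upperBand_eq_bot : upperBand R h (Finset.univ.sup h + 1) = ⊥ :=
  (Submodule.eq_bot_iff _).2 fun A hA => ext fun i j =>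
    hA i j (by have := Finset.le_sup (f := h) (Finset.mem_univ j); omega)

variable [DecidableEq n]

/-- For `k = 0`, the diagonal of the commutator vanishes because the diagonal of a product of
triangular matrices is the product of the (commuting) diagonals. -/
theorem lie_mem_upperBand_succ (hh : Function.Injective h) {k : ℕ} {A B : Matrix n n R}
    (hA : A ∈ upperBand R h k) (hB : B ∈ upperBand R h k) : ⁅A, B⁆ ∈ upperBand R h (k + 1) := by
  rw [Ring.lie_def]
  cases k with
  | zero =>
    intro i j hij
    rw [sub_apply]
    obtain rfl | hne := eq_or_ne i j
    · rw [mul_apply_self_of_mem_upperBand_zero hh hA hB,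
        mul_apply_self_of_mem_upperBand_zero hh hB hA, mul_comm, sub_self]
    · have hlt : h j < h i + (0 + 0) := by have := hh.ne hne; omega
      rw [mul_mem_upperBand hA hB i j hlt, mul_mem_upperBand hB hA i j hlt, sub_self]
  | succ k =>
    exact upperBand_anti (by omega)
      (sub_mem (mul_mem_upperBand hA hB) (mul_mem_upperBand hB hA))

theorem isSolvable_of_le_upperBand (hh : Function.Injective h)
    (S : LieSubalgebra R (Matrix n n R)) (hS : S.toSubmodule ≤ upperBand R h 0) :
    LieAlgebra.IsSolvable S :=
  S.isSolvable_of_lie_mem_succ (upperBand R h)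
    (fun _ _ hA _ hB => lie_mem_upperBand_succ hh hA hB) hS upperBand_eq_bot

end Matrix

theorem trace_gellMann (k : Fin 8) : trace (gellMann k) = 0 := by
  fin_cases k <;> simp [gellMann, trace_fin_three]; ring

theorem span_range_gellMann :
    Submodule.span ℂ (Set.range gellMann) = LinearMap.ker (traceLinearMap (Fin 3) ℂ ℂ) := by
  refine le_antisymm (Submodule.span_le.2 ?_) fun x hx => ?_
  · rintro _ ⟨k, rfl⟩
    exact trace_gellMann k
  have htr : x 2 2 = -x 0 0 - x 1 1 := by
    rw [LinearMap.mem_ker, traceLinearMap_apply, trace_fin_three] at hx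
    linear_combination hx
  rw [Submodule.mem_span_range_iff_exists_fun]
  -- the coefficient of `λₖ` is `tr (x λₖ) / 2`
  refine ⟨![(x 0 1 + x 1 0) / 2, Complex.I * (x 0 1 - x 1 0) / 2, (x 0 0 - x 1 1) / 2,
    (x 0 2 + x 2 0) / 2, Complex.I * (x 0 2 - x 2 0) / 2, (x 1 2 + x 2 1) / 2,
    Complex.I * (x 1 2 - x 2 1) / 2, Real.sqrt 3 * (x 0 0 + x 1 1) / 2], ?_⟩
  ext i j
  fin_cases i <;> fin_cases j <;>
    simp [Fin.sum_univ_eight, gellMann, htr] <;> field_simp <;> ring_nf <;> simp <;> ring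

theorem Submodule.mem_of_add_smul_mem_of_sub_smul_mem {K M : Type*} [Field K] [NeZero (2 : K)]
    [AddCommGroup M] [Module K M] {P : Submodule K M} {u v : M} {a : K} (ha : a ≠ 0)
    (hadd : u + a • v ∈ P) (hsub : u - a • v ∈ P) : u ∈ P ∧ v ∈ P := by
  have hu : u = (2 : K)⁻¹ • ((u + a • v) + (u - a • v)) := by
    rw [add_add_sub_cancel, ← two_smul K, smul_smul, inv_mul_cancel₀ two_ne_zero, one_smul]
  have hv : v = (2 * a)⁻¹ • ((u + a • v) - (u - a • v)) := by
    rw [add_sub_sub_cancel, ← two_smul K, smul_smul, smul_smul, mul_assoc,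
      inv_mul_cancel₀ (mul_ne_zero two_ne_zero ha), one_smul]
  exact ⟨hu ▸ P.smul_mem _ (P.add_mem hadd hsub), hv ▸ P.smul_mem _ (P.sub_mem hadd hsub)⟩

theorem Submodule.inf_eq_bot_of_finrank_add_le {K V : Type*} [DivisionRing K] [AddCommGroup V]
    [Module K V] [FiniteDimensional K V] {s t : Submodule K V}
    (h : finrank K s + finrank K t ≤ finrank K ↥(s ⊔ t)) : s ⊓ t = ⊥ := by
  have := Submodule.finrank_sup_add_finrank_inf_eq s t
  exact Submodule.finrank_eq_zero.1 (by omega)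

theorem Matrix.finrank_ker_traceLinearMap (K : Type*) {n : Type*} [Field K] [Fintype n]
    [DecidableEq n] [Nonempty n] :
    finrank K (LinearMap.ker (traceLinearMap n K K)) + 1 = Fintype.card n * Fintype.card n := by
  have hsurj : Function.Surjective (traceLinearMap n K K) := fun c =>
    ⟨single (Classical.arbitrary n) (Classical.arbitrary n) c, by simp⟩
  have := LinearMap.finrank_range_add_finrank_ker (traceLinearMap n K K)
  rw [LinearMap.range_eq_top.2 hsurj, finrank_top, finrank_self, finrank_matrix, finrank_self,
    mul_one] at this
  omega

namespace GellMann

open Submodule Complex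

noncomputable def sPlus : Submodule ℂ (Matrix (Fin 3) (Fin 3) ℂ) :=
  span ℂ {gellMann 2 + I • gellMann 7, gellMann 0 + I • gellMann 1,
    gellMann 3 + I • gellMann 4, gellMann 5 + I • gellMann 6}

noncomputable def sMinus : Submodule ℂ (Matrix (Fin 3) (Fin 3) ℂ) :=
  span ℂ {gellMann 2 - I • gellMann 7, gellMann 0 - I • gellMann 1,
    gellMann 3 - I • gellMann 4, gellMann 5 - I • gellMann 6}

theorem sPlus_le_span_gellMann : sPlus ≤ span ℂ (Set.range gellMann) := by
  refine span_le.2 ?_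
  rintro _ (rfl | rfl | rfl | rfl) <;>
    exact add_mem (subset_span ⟨_, rfl⟩) (smul_mem _ _ (subset_span ⟨_, rfl⟩))

theorem sMinus_le_span_gellMann : sMinus ≤ span ℂ (Set.range gellMann) := by
  refine span_le.2 ?_
  rintro _ (rfl | rfl | rfl | rfl) <;>
    exact sub_mem (subset_span ⟨_, rfl⟩) (smul_mem _ _ (subset_span ⟨_, rfl⟩))

theorem span_gellMann_le_sPlus_sup_sMinus : span ℂ (Set.range gellMann) ≤ sPlus ⊔ sMinus := by
  have pair (a b : Fin 8) (hp : gellMann a + I • gellMann b ∈ sPlus)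
      (hm : gellMann a - I • gellMann b ∈ sMinus) :
      gellMann a ∈ sPlus ⊔ sMinus ∧ gellMann b ∈ sPlus ⊔ sMinus :=
    mem_of_add_smul_mem_of_sub_smul_mem I_ne_zero (mem_sup_left hp) (mem_sup_right hm)
  obtain ⟨h2, h7⟩ := pair 2 7 (subset_span (by simp)) (subset_span (by simp))
  obtain ⟨h0, h1⟩ := pair 0 1 (subset_span (by simp)) (subset_span (by simp))
  obtain ⟨h3, h4⟩ := pair 3 4 (subset_span (by simp)) (subset_span (by simp))
  obtain ⟨h5, h6⟩ := pair 5 6 (subset_span (by simp)) (subset_span (by simp))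
  refine span_le.2 (Set.range_subset_iff.2 fun k => ?_)
  fin_cases k <;> assumption

theorem sPlus_sup_sMinus : sPlus ⊔ sMinus = LinearMap.ker (traceLinearMap (Fin 3) ℂ ℂ) :=
  span_range_gellMann ▸ le_antisymm (sup_le sPlus_le_span_gellMann sMinus_le_span_gellMann)
    span_gellMann_le_sPlus_sup_sMinus

theorem finrank_sPlus_le : finrank ℂ sPlus ≤ 4 := by
  classical
  exact (finrank_span_le_card _).trans (by simpa using Finset.card_le_four)

theorem finrank_sMinus_le : finrank ℂ sMinus ≤ 4 := by
  classical
  exact (finrank_span_le_card _).trans (by simpa using Finset.card_le_four)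

theorem sPlus_inf_sMinus : sPlus ⊓ sMinus = ⊥ := by
  refine inf_eq_bot_of_finrank_add_le ?_
  have := Matrix.finrank_ker_traceLinearMap ℂ (n := Fin 3)
  rw [sPlus_sup_sMinus]
  simp only [Fintype.card_fin] at this
  linarith [finrank_sPlus_le, finrank_sMinus_le]

theorem sPlus_le_upperBand : sPlus ≤ upperBand ℂ Fin.val 0 := by
  refine span_le.2 ?_
  rintro _ (rfl | rfl | rfl | rfl) i j hij <;> fin_cases i <;> fin_cases j <;>
    simp_all [gellMann]

theorem sMinus_le_upperBand : sMinus ≤ upperBand ℂ (Fin.val ∘ Fin.rev) 0 := by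
  refine span_le.2 ?_
  rintro _ (rfl | rfl | rfl | rfl) i j hij <;> fin_cases i <;> fin_cases j <;>
    simp_all [gellMann]

theorem upperBand_one_le_sPlus : upperBand ℂ Fin.val 1 ≤ sPlus := by
  intro A hA
  have hA_eq : A = (A 0 1 / 2) • (gellMann 0 + I • gellMann 1) +
      (A 0 2 / 2) • (gellMann 3 + I • gellMann 4) +
      (A 1 2 / 2) • (gellMann 5 + I • gellMann 6) := by
    ext i j
    have hij := hA i j
    fin_cases i <;> fin_cases j <;> simp_all [gellMann] <;> ring
  rw [hA_eq]
  exact add_mem (add_mem (smul_mem _ _ (subset_span (by simp)))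
    (smul_mem _ _ (subset_span (by simp)))) (smul_mem _ _ (subset_span (by simp)))

theorem upperBand_one_le_sMinus : upperBand ℂ (Fin.val ∘ Fin.rev) 1 ≤ sMinus := by
  intro A hA
  have hA_eq : A = (A 1 0 / 2) • (gellMann 0 - I • gellMann 1) +
      (A 2 0 / 2) • (gellMann 3 - I • gellMann 4) +
      (A 2 1 / 2) • (gellMann 5 - I • gellMann 6) := by
    ext i j
    have hij := hA i j
    fin_cases i <;> fin_cases j <;> simp_all [gellMann] <;> ring
  rw [hA_eq]
  exact add_mem (add_mem (smul_mem _ _ (subset_span (by simp)))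
    (smul_mem _ _ (subset_span (by simp)))) (smul_mem _ _ (subset_span (by simp)))

theorem lie_mem_sPlus {x y : Matrix (Fin 3) (Fin 3) ℂ} (hx : x ∈ sPlus) (hy : y ∈ sPlus) :
    ⁅x, y⁆ ∈ sPlus :=
  upperBand_one_le_sPlus <|
    lie_mem_upperBand_succ Fin.val_injective (sPlus_le_upperBand hx) (sPlus_le_upperBand hy)

theorem lie_mem_sMinus {x y : Matrix (Fin 3) (Fin 3) ℂ} (hx : x ∈ sMinus) (hy : y ∈ sMinus) :
    ⁅x, y⁆ ∈ sMinus :=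
  upperBand_one_le_sMinus <| lie_mem_upperBand_succ (Fin.val_injective.comp Fin.rev_injective)
    (sMinus_le_upperBand hx) (sMinus_le_upperBand hy)

end GellMann

open GellMann in
/-- in `sl(3,ℂ)` (traceless `3×3` complex matrices, with the commutator
bracket of the matrix algebra), `s₊ = span{λ₃+iλ₈, λ₁+iλ₂, λ₄+iλ₅, λ₆+iλ₇}` and
`s₋ = span{λ₃−iλ₈, λ₁−iλ₂, λ₄−iλ₅, λ₆−iλ₇}` are solvable Lie subalgebras with
`s₊ ⊕ s₋ = sl(3,ℂ)` as vector spaces. -/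
theorem sl3_gellmann_double_decomposition
    (sp sm : Submodule ℂ (Matrix (Fin 3) (Fin 3) ℂ))
    (hsp : sp = Submodule.span ℂ
      {gellMann 2 + Complex.I • gellMann 7, gellMann 0 + Complex.I • gellMann 1,
       gellMann 3 + Complex.I • gellMann 4, gellMann 5 + Complex.I • gellMann 6})
    (hsm : sm = Submodule.span ℂ
      {gellMann 2 - Complex.I • gellMann 7, gellMann 0 - Complex.I • gellMann 1,
       gellMann 3 - Complex.I • gellMann 4, gellMann 5 - Complex.I • gellMann 6}) :
    (∀ x ∈ sp, ∀ y ∈ sp, ⁅x, y⁆ ∈ sp) ∧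
    (∀ x ∈ sm, ∀ y ∈ sm, ⁅x, y⁆ ∈ sm) ∧
    (∀ S : LieSubalgebra ℂ (Matrix (Fin 3) (Fin 3) ℂ), S.toSubmodule = sp →
      LieAlgebra.IsSolvable S) ∧
    (∀ S : LieSubalgebra ℂ (Matrix (Fin 3) (Fin 3) ℂ), S.toSubmodule = sm →
      LieAlgebra.IsSolvable S) ∧
    sp ⊓ sm = ⊥ ∧
    sp ⊔ sm = LinearMap.ker (traceLinearMap (Fin 3) ℂ ℂ) := by
  obtain rfl : sp = sPlus := hsp
  obtain rfl : sm = sMinus := hsm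
  refine ⟨fun x hx y hy => lie_mem_sPlus hx hy, fun x hx y hy => lie_mem_sMinus hx hy,
    fun S hS => isSolvable_of_le_upperBand Fin.val_injective S (hS ▸ sPlus_le_upperBand),
    fun S hS => isSolvable_of_le_upperBand (Fin.val_injective.comp Fin.rev_injective) S
      (hS ▸ sMinus_le_upperBand), sPlus_inf_sMinus, sPlus_sup_sMinus⟩
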